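/- Let (H,R) be a braided bialgebra over a field k with R = Σ s_i⊗t_i, let φ : H → H be a bialgebra automorphism with (φ⊗φ)(R) = R, and let K ∈ H be an invertible element satisfying Δ(K) = (K⊗1)·(id⊗φ)(R)·(1⊗K)·R_21. For a left H-module M let M^φ denote the H-module with the same underlying space and action h·_φ m = φ(h)·m. For left H-modules P and Q define ĉ_{P,Q} : P⊗Q → Q⊗P by ĉ_{P,Q}(p⊗q) = Σ (s_i·q)⊗(t_i·p), where the actions are those of the given module structures, and let k_M : M → M denote the action of K. Then for all left H-modules M,N the φ-twisted reflection equation holds as an identity of k-linear maps M⊗N → M⊗N: (k_M⊗id_N)∘ĉ_{N^φ,M}∘(k_N⊗id_M)∘ĉ_{M,N} = ĉ_{N^φ,M^φ}∘(k_N⊗id_M)∘ĉ_{M^φ,N}∘(k_M⊗id_N). -/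

import Mathlib

/- Braided bialgebras: basic tensor-leg maps and the universal R-matrix axioms. -/

open scoped TensorProduct

noncomputable section

variable (k H : Type*) [Field k] [Ring H] [Bialgebra k H]

/-- The flip `a ⊗ b ↦ b ⊗ a` on `H ⊗[k] H`, as an algebra homomorphism. -/
def tflip : H ⊗[k] H →ₐ[k] H ⊗[k] H := (Algebra.TensorProduct.comm k H H).toAlgHom

/-- `s ⊗ t ↦ s ⊗ t ⊗ 1 : H ⊗ H → H ⊗ H ⊗ H`. -/
def leg12 : H ⊗[k] H →ₐ[k] H ⊗[k] (H ⊗[k] H) :=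
  Algebra.TensorProduct.map (AlgHom.id k H) Algebra.TensorProduct.includeLeft

/-- `s ⊗ t ↦ s ⊗ 1 ⊗ t : H ⊗ H → H ⊗ H ⊗ H`. -/
def leg13 : H ⊗[k] H →ₐ[k] H ⊗[k] (H ⊗[k] H) :=
  Algebra.TensorProduct.map (AlgHom.id k H) Algebra.TensorProduct.includeRight

/-- `s ⊗ t ↦ 1 ⊗ s ⊗ t : H ⊗ H → H ⊗ H ⊗ H`. -/
def leg23 : H ⊗[k] H →ₐ[k] H ⊗[k] (H ⊗[k] H) :=
  Algebra.TensorProduct.includeRight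

/-- `Δ ⊗ id : H ⊗ H → H ⊗ H ⊗ H`. -/
def comulLeft : H ⊗[k] H →ₐ[k] H ⊗[k] (H ⊗[k] H) :=
  (Algebra.TensorProduct.assoc k k k H H H).toAlgHom.comp
    (Algebra.TensorProduct.map (Bialgebra.comulAlgHom k H) (AlgHom.id k H))

/-- `id ⊗ Δ : H ⊗ H → H ⊗ H ⊗ H`. -/
def comulRight : H ⊗[k] H →ₐ[k] H ⊗[k] (H ⊗[k] H) :=
  Algebra.TensorProduct.map (AlgHom.id k H) (Bialgebra.comulAlgHom k H)

/-- `(H, R)` is a braided bialgebra with `R⁻¹ = Rinv`:  `R` is an invertible element of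
`H ⊗ H` satisfying `Δ(x) · R = R · Δ^op(x)` for all `x` and the two hexagon identities
`(Δ ⊗ id)(R) = R₂₃ · R₁₃` and `(id ⊗ Δ)(R) = R₁₂ · R₁₃`. -/
def IsUniversalRMatrix (R Rinv : H ⊗[k] H) : Prop :=
  R * Rinv = 1 ∧ Rinv * R = 1 ∧
  (∀ x : H, Bialgebra.comulAlgHom k H x * R = R * tflip k H (Bialgebra.comulAlgHom k H x)) ∧
  comulLeft k H R = leg23 k H R * leg13 k H R ∧
  comulRight k H R = leg12 k H R * leg13 k H R

/-- The action of an element `z = Σ sᵢ ⊗ tᵢ` of `H ⊗ H` on `M ⊗ N`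
(first leg acting on `M`, second leg acting on `N`). -/
def act2 (M N : Type*) [AddCommGroup M] [Module k M] [Module H M]
    [IsScalarTower k H M] [SMulCommClass H k M]
    [AddCommGroup N] [Module k N] [Module H N]
    [IsScalarTower k H N] [SMulCommClass H k N]
    (z : H ⊗[k] H) : M ⊗[k] N →ₗ[k] M ⊗[k] N :=
  TensorProduct.homTensorHomMap (RingHom.id k) M N M N
    (TensorProduct.map (Algebra.lsmul k k M (A := H)).toLinearMap
      (Algebra.lsmul k k N (A := H)).toLinearMap z)

/-- The braiding-type map `M ⊗ N → N ⊗ M` determined by `z = Σ sᵢ ⊗ tᵢ ∈ H ⊗ H`: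
`m ⊗ n ↦ Σ (sᵢ · n) ⊗ (tᵢ · m)`. -/
def braidMap (M N : Type*) [AddCommGroup M] [Module k M] [Module H M]
    [IsScalarTower k H M] [SMulCommClass H k M]
    [AddCommGroup N] [Module k N] [Module H N]
    [IsScalarTower k H N] [SMulCommClass H k N]
    (z : H ⊗[k] H) : M ⊗[k] N →ₗ[k] N ⊗[k] M :=
  (act2 k H N M z).comp (TensorProduct.comm k M N).toLinearMap

/-- The `k`-linear endomorphism of `M` given by the action of `K ∈ H`. -/
def actK (M : Type*) [AddCommGroup M] [Module k M] [Module H M]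
    [IsScalarTower k H M] [SMulCommClass H k M]
    (K : H) : M →ₗ[k] M :=
  Algebra.lsmul k k M (A := H) K

/-!
Both sides are the action on `M ⊗ N` of a single element of `H ⊗ H`: moving the flips
through the actions, the left side is `(K ⊗ 1) (id ⊗ φ)(R) (1 ⊗ K) R₂₁ = Δ(K)` and the right
side is `(φ ⊗ φ)(R) · (1 ⊗ K) (φ ⊗ id)(R₂₁) (K ⊗ 1)`. Since `(φ ⊗ φ)(R) = R`, the right side is
`R · Δ^op(K) · R⁻¹`, which is again `Δ(K)` because `R` intertwines `Δ` and `Δ^op`.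
-/

lemma tflip_tmul (a b : H) : tflip k H (a ⊗ₜ[k] b) = b ⊗ₜ[k] a := rfl

lemma tflip_tflip (z : H ⊗[k] H) : tflip k H (tflip k H z) = z :=
  TensorProduct.comm_comm k H H z

lemma comul_eq_mul_tflip_mul {R Rinv : H ⊗[k] H} (hR : IsUniversalRMatrix k H R Rinv) (x : H) :
    Bialgebra.comulAlgHom k H x = R * tflip k H (Bialgebra.comulAlgHom k H x) * Rinv := by
  obtain ⟨hRRinv, -, hcomm, -, -⟩ := hR
  rw [← hcomm, mul_assoc, hRRinv, mul_one]

section Actions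

variable (M N : Type*) [AddCommGroup M] [Module k M] [Module H M]
    [IsScalarTower k H M] [SMulCommClass H k M]
    [AddCommGroup N] [Module k N] [Module H N]
    [IsScalarTower k H N] [SMulCommClass H k N]

lemma act2_tmul (s t : H) :
    act2 k H M N (s ⊗ₜ[k] t)
      = TensorProduct.map (Algebra.lsmul k k M (A := H) s) (Algebra.lsmul k k N (A := H) t) := by
  simp [act2]

lemma act2_eq_endTensorEndAlgHom (z : H ⊗[k] H) :
    act2 k H M N z =
      Module.endTensorEndAlgHom (R := k) (S := k) (A := k) (M := M) (N := N)
        (Algebra.TensorProduct.map (Algebra.lsmul k k M (A := H))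
          (Algebra.lsmul k k N (A := H)) z) := by
  induction z using TensorProduct.induction_on with
  | zero => simp [act2]
  | tmul s t =>
      ext m n
      simp [act2_tmul, Module.endTensorEndAlgHom_apply]
  | add x y hx hy => simp only [act2, map_add] at hx hy ⊢; rw [hx, hy]

lemma act2_mul (z w : H ⊗[k] H) :
    act2 k H M N (z * w) = act2 k H M N z ∘ₗ act2 k H M N w := by
  simp only [act2_eq_endTensorEndAlgHom, map_mul]
  rfl

lemma map_actK_id (h : H) :
    TensorProduct.map (actK k H M h) LinearMap.id = act2 k H M N (h ⊗ₜ[k] (1 : H)) := by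
  ext m n
  simp [actK, act2_tmul]

lemma comm_comp_act2 (z : H ⊗[k] H) :
    (TensorProduct.comm k M N).toLinearMap ∘ₗ act2 k H M N z
      = act2 k H N M (tflip k H z) ∘ₗ (TensorProduct.comm k M N).toLinearMap := by
  induction z using TensorProduct.induction_on with
  | zero => simp [act2]
  | tmul s t =>
      ext m n
      simp [tflip_tmul, act2_tmul]
  | add x y hx hy =>
      simp only [act2, map_add, LinearMap.add_comp, LinearMap.comp_add] at hx hy ⊢
      rw [hx, hy]

lemma act2_comp_braidMap (x y : H ⊗[k] H) :
    act2 k H N M x ∘ₗ braidMap k H M N y = braidMap k H M N (x * y) := by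
  rw [braidMap, braidMap, act2_mul, LinearMap.comp_assoc]

lemma braidMap_comp_act2 (z x : H ⊗[k] H) :
    braidMap k H M N z ∘ₗ act2 k H M N x = braidMap k H M N (z * tflip k H x) := by
  rw [braidMap, braidMap, LinearMap.comp_assoc, comm_comp_act2, act2_mul, LinearMap.comp_assoc]

lemma braidMap_comp_braidMap (z y : H ⊗[k] H) :
    braidMap k H N M z ∘ₗ braidMap k H M N y = act2 k H M N (z * tflip k H y) := by
  conv_lhs => arg 2; rw [braidMap]
  rw [← LinearMap.comp_assoc, braidMap_comp_act2, braidMap, LinearMap.comp_assoc,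
    TensorProduct.comm_comp_comm, LinearMap.comp_id]

end Actions

/- The braidings involving a twisted module `P^φ` are `braidMap` with the corresponding leg of
`R` composed with `φ`: `ĉ_{N^φ,M}` and `ĉ_{M^φ,N}` use `(id ⊗ φ)(R)`, `ĉ_{N^φ,M^φ}` uses
`(φ ⊗ φ)(R)`. -/
theorem twisted_reflection_equation_on_modules
    (R Rinv : H ⊗[k] H) (hR : IsUniversalRMatrix k H R Rinv)
    (φ : H ≃ₐc[k] H)
    (hφR : Algebra.TensorProduct.map (φ.toBialgHom : H →ₐ[k] H)
      (φ.toBialgHom : H →ₐ[k] H) R = R)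
    (K : H)
    (hΔK : Bialgebra.comulAlgHom k H K =
      (K ⊗ₜ[k] (1 : H)) *
        Algebra.TensorProduct.map (AlgHom.id k H) (φ.toBialgHom : H →ₐ[k] H) R *
        ((1 : H) ⊗ₜ[k] K) * tflip k H R)
    (M N : Type*) [AddCommGroup M] [Module k M] [Module H M]
    [IsScalarTower k H M] [SMulCommClass H k M]
    [AddCommGroup N] [Module k N] [Module H N]
    [IsScalarTower k H N] [SMulCommClass H k N] :
    (TensorProduct.map (actK k H M K) LinearMap.id).comp
        ((braidMap k H N M
            (Algebra.TensorProduct.map (AlgHom.id k H) (φ.toBialgHom : H →ₐ[k] H) R)).comp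
          ((TensorProduct.map (actK k H N K) LinearMap.id).comp (braidMap k H M N R)))
      = (braidMap k H N M
            (Algebra.TensorProduct.map (φ.toBialgHom : H →ₐ[k] H)
              (φ.toBialgHom : H →ₐ[k] H) R)).comp
          ((TensorProduct.map (actK k H N K) LinearMap.id).comp
            ((braidMap k H M N
                (Algebra.TensorProduct.map (AlgHom.id k H)
                  (φ.toBialgHom : H →ₐ[k] H) R)).comp
              (TensorProduct.map (actK k H M K) LinearMap.id))) := by
  rw [map_actK_id k H M N, map_actK_id k H N M]
  calc _ = act2 k H M N (Bialgebra.comulAlgHom k H K) := by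
        rw [act2_comp_braidMap, braidMap_comp_braidMap, ← act2_mul, hΔK]
        simp only [map_mul, tflip_tmul, mul_assoc]
    _ = _ := by
        rw [braidMap_comp_act2, act2_comp_braidMap, braidMap_comp_braidMap, hφR,
          comul_eq_mul_tflip_mul k H hR, hΔK]
        simp only [map_mul, tflip_tmul, tflip_tflip, mul_assoc, hR.1, mul_one]
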